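/- arXiv:2012.09661 — 5 statements merged into one kernel-verified Lean document; each statement's English description precedes it below -/
import Mathlib

section
/- Let a > 0, b ≥ 0, c, d ∈ ℝ. Suppose y : (0, ∞) → ℝ is a twice continuously differentiable solution of x² y''(x) + (c x + d) y'(x) − (a x + b) y(x) = 0, and suppose there exists x₂ > 0 with y(x₂) > 0 and y'(x₂) < 0. Then y is positive and strictly decreasing on (0, x₂]. -/
open Set Filter Topology

theorem stmt_6 (a b c d : ℝ) (ha : 0 < a) (hb : 0 ≤ b)
    (y y' y'' : ℝ → ℝ)
    (hy : ∀ x ∈ Ioi (0:ℝ), HasDerivAt y (y' x) x)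
    (hy' : ∀ x ∈ Ioi (0:ℝ), HasDerivAt y' (y'' x) x)
    (hy''cont : ContinuousOn y'' (Ioi (0:ℝ)))
    (hode : ∀ x ∈ Ioi (0:ℝ),
      x ^ 2 * y'' x + (c * x + d) * y' x - (a * x + b) * y x = 0)
    (x₂ : ℝ) (hx₂ : 0 < x₂) (hpos : 0 < y x₂) (hneg : y' x₂ < 0) :
    (∀ x ∈ Ioc (0:ℝ) x₂, 0 < y x) ∧ StrictAntiOn y (Ioc (0:ℝ) x₂) := by
  have hderiv : ∀ x ∈ Ioi (0:ℝ), deriv y x = y' x := fun x hx => (hy x hx).deriv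
  -- Step 1: y' < 0 on (0, x₂]
  have key : ∀ x ∈ Ioc (0:ℝ) x₂, y' x < 0 := by
    by_contra hcon
    push_neg at hcon
    obtain ⟨a₀, ha₀, ha₀'⟩ := hcon
    set A : Set ℝ := {t | t ∈ Ioc (0:ℝ) x₂ ∧ 0 ≤ y' t} with hA
    have hAne : A.Nonempty := ⟨a₀, ha₀, ha₀'⟩
    have hAbdd : BddAbove A := ⟨x₂, fun t ht => ht.1.2⟩
    set t₀ := sSup A with ht₀def
    have ht₀pos : 0 < t₀ := lt_of_lt_of_le ha₀.1 (le_csSup hAbdd ⟨ha₀, ha₀'⟩)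
    have ht₀le : t₀ ≤ x₂ := csSup_le hAne fun t ht => ht.1.2
    have ht₀mem : t₀ ∈ Ioi (0:ℝ) := ht₀pos
    have hclos : t₀ ∈ closure A := csSup_mem_closure hAne hAbdd
    have hy'cont : ContinuousAt y' t₀ := (hy' t₀ ht₀mem).continuousAt
    have h1 : 0 ≤ y' t₀ := by
      have hne : (𝓝[A] t₀).NeBot := mem_closure_iff_nhdsWithin_neBot.mp hclos
      have htend : Tendsto y' (𝓝[A] t₀) (𝓝 (y' t₀)) := hy'cont.continuousWithinAt.tendsto
      refine ge_of_tendsto htend ?_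
      filter_upwards [self_mem_nhdsWithin] with x hx using hx.2
    have ht₀lt : t₀ < x₂ :=
      lt_of_le_of_ne ht₀le (by intro h; rw [h] at h1; exact absurd h1 (not_le.mpr hneg))
    have hneg' : ∀ x ∈ Ioc t₀ x₂, y' x < 0 := by
      intro x hx
      by_contra h
      push_neg at h
      have hxA : x ∈ A := ⟨⟨ht₀pos.trans hx.1, hx.2⟩, h⟩
      exact absurd (le_csSup hAbdd hxA) (not_le.mpr hx.1)
    have h2 : y' t₀ ≤ 0 := by
      have ht : Tendsto y' (𝓝[>] t₀) (𝓝 (y' t₀)) := hy'cont.continuousWithinAt.tendsto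
      refine le_of_tendsto ht ?_
      filter_upwards [Ioo_mem_nhdsGT_of_mem ⟨le_refl t₀, ht₀lt⟩] with x hx
      exact (hneg' x ⟨hx.1, hx.2.le⟩).le
    have h0 : y' t₀ = 0 := le_antisymm h2 h1
    have hanti : StrictAntiOn y (Icc t₀ x₂) := by
      apply strictAntiOn_of_deriv_neg (convex_Icc _ _)
      · intro x hx
        exact ((hy x (lt_of_lt_of_le ht₀pos hx.1)).continuousAt).continuousWithinAt
      · intro x hx
        rw [interior_Icc] at hx
        rw [hderiv x (ht₀pos.trans hx.1)]
        exact hneg' x ⟨hx.1, hx.2.le⟩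
    have hyt₀ : 0 < y t₀ :=
      hpos.trans (hanti (left_mem_Icc.mpr ht₀le) (right_mem_Icc.mpr ht₀le) ht₀lt)
    have hode0 := hode t₀ ht₀mem
    rw [h0] at hode0
    have heq : t₀ ^ 2 * y'' t₀ = (a * t₀ + b) * y t₀ := by linarith [hode0]
    have hab : 0 < a * t₀ + b := add_pos_of_pos_of_nonneg (mul_pos ha ht₀pos) hb
    have hrhs : 0 < (a * t₀ + b) * y t₀ := mul_pos hab hyt₀
    have hy''pos : 0 < y'' t₀ := by nlinarith [sq_nonneg t₀, heq, hrhs]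
    have hslope : Tendsto (slope y' t₀) (𝓝[≠] t₀) (𝓝 (y'' t₀)) :=
      hasDerivAt_iff_tendsto_slope.mp (hy' t₀ ht₀mem)
    have hev : ∀ᶠ x in 𝓝[≠] t₀, 0 < slope y' t₀ x :=
      hslope.eventually (eventually_gt_nhds hy''pos)
    have hev' : ∀ᶠ x in 𝓝[>] t₀, 0 < slope y' t₀ x :=
      hev.filter_mono (nhdsWithin_mono t₀ (fun x hx => ne_of_gt hx))
    obtain ⟨x, hx1, hx2⟩ := (hev'.and (Ioo_mem_nhdsGT_of_mem ⟨le_refl t₀, ht₀lt⟩)).exists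
    have hxy' : y' x < 0 := hneg' x ⟨hx2.1, hx2.2.le⟩
    rw [slope_def_field] at hx1
    rw [h0, sub_zero] at hx1
    have hle : y' x / (x - t₀) ≤ 0 :=
      div_nonpos_of_nonpos_of_nonneg hxy'.le (sub_pos.mpr hx2.1).le
    linarith
  -- Step 2: strict antitonicity
  have hanti2 : StrictAntiOn y (Ioc (0:ℝ) x₂) := by
    intro u hu v hv huv
    have hA : StrictAntiOn y (Icc u v) := by
      apply strictAntiOn_of_deriv_neg (convex_Icc _ _)
      · intro x hx
        exact ((hy x (lt_of_lt_of_le hu.1 hx.1)).continuousAt).continuousWithinAt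
      · intro x hx
        rw [interior_Icc] at hx
        rw [hderiv x (hu.1.trans hx.1)]
        exact key x ⟨hu.1.trans hx.1, hx.2.le.trans hv.2⟩
    exact hA (left_mem_Icc.mpr huv.le) (right_mem_Icc.mpr huv.le) huv
  refine ⟨?_, hanti2⟩
  intro x hx
  rcases eq_or_lt_of_le hx.2 with h | h
  · rw [h]; exact hpos
  · exact hpos.trans (hanti2 hx ⟨hx₂, le_refl x₂⟩ h)
end

section
/- Let a > 0, b ≥ 0, c ∈ ℝ, d > 0. Suppose y : (0, ∞) → ℝ is a twice continuously differentiable solution of x² y''(x) + (c x + d) y'(x) − (a x + b) y(x) = 0, and suppose there exists x₂ > 0 with y(x₂) > 0 and y'(x₂) > 0. Then y is positive and strictly increasing on [x₂, ∞). -/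
/-!
If `y'` had a zero after `x₂`, let `t` be the first one. On `[x₂, t]` the function `y` increases,
so `y t > 0`, and the equation at `t` reads `t² y''(t) = (a t + b) y(t) > 0`. But `y' > 0` on
`[x₂, t)` and `y'(t) = 0` force `y''(t) ≤ 0`. Hence `y' > 0` on `[x₂, ∞)`, and `y` increases
there.
-/

open Set Filter Topology

theorem exists_first_zero_of_pos_of_nonpos {g : ℝ → ℝ} {a b : ℝ} (hab : a ≤ b)
    (hg : ContinuousOn g (Icc a b)) (ha : 0 < g a) (hb : g b ≤ 0) :
    ∃ t ∈ Ioc a b, g t = 0 ∧ ∀ s ∈ Ico a t, 0 < g s := by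
  set Z := Icc a b ∩ g ⁻¹' Iic 0
  have hZ : IsCompact Z :=
    isCompact_Icc.of_isClosed_subset (hg.preimage_isClosed_of_isClosed isClosed_Icc isClosed_Iic)
      inter_subset_left
  obtain ⟨t, ⟨⟨hat, htb⟩, hgt⟩, ht_least⟩ := hZ.exists_isLeast ⟨b, ⟨⟨hab, le_rfl⟩, hb⟩⟩
  have hpos : ∀ s ∈ Ico a t, 0 < g s := fun s hs =>
    lt_of_not_ge fun hgs => hs.2.not_ge (ht_least ⟨⟨hs.1, hs.2.le.trans htb⟩, hgs⟩)
  have hat' : a < t := hat.lt_of_ne fun h => (h ▸ ha).not_ge hgt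
  obtain ⟨s, hs, hgs⟩ := intermediate_value_Icc' hat (hg.mono (Icc_subset_Icc_right htb))
    ⟨hgt, ha.le⟩
  have hst : s = t :=
    le_antisymm hs.2 (ht_least ⟨⟨hs.1, hs.2.trans htb⟩, hgs.le⟩)
  exact ⟨t, ⟨hat', htb⟩, hst ▸ hgs, hpos⟩

theorem HasDerivAt.nonpos_of_le_left {g : ℝ → ℝ} {g' a t : ℝ} (hg : HasDerivAt g g' t)
    (hat : a < t) (hle : ∀ s ∈ Ioo a t, g t ≤ g s) : g' ≤ 0 := by
  have hslope : Tendsto (slope g t) (𝓝[<] t) (𝓝 g') :=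
    (hasDerivAt_iff_tendsto_slope_left_right.mp hg).1
  refine le_of_tendsto hslope ?_
  filter_upwards [Ioo_mem_nhdsLT hat] with s hs
  rw [slope_def_field]
  exact div_nonpos_of_nonneg_of_nonpos (sub_nonneg.mpr (hle s hs)) (sub_nonpos.mpr hs.2.le)

theorem pos_on_Ici_of_hasDerivAt_pos_at_first_zero {g g' : ℝ → ℝ} {x₀ : ℝ}
    (hg : ContinuousOn g (Ici x₀)) (h₀ : 0 < g x₀)
    (hzero : ∀ t, x₀ < t → g t = 0 → (∀ s ∈ Ico x₀ t, 0 < g s) →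
      HasDerivAt g (g' t) t ∧ 0 < g' t) :
    ∀ x ∈ Ici x₀, 0 < g x := by
  intro x hx
  by_contra! hgx
  obtain ⟨t, ⟨hx₀t, -⟩, hgt, hpos⟩ :=
    exists_first_zero_of_pos_of_nonpos hx (hg.mono Icc_subset_Ici_self) h₀ hgx
  obtain ⟨hderiv, hderiv_pos⟩ := hzero t hx₀t hgt hpos
  refine hderiv_pos.not_ge (hderiv.nonpos_of_le_left hx₀t fun s hs => ?_)
  rw [hgt]
  exact (hpos s ⟨hs.1.le, hs.2⟩).le

theorem strictMonoOn_of_hasDerivAt_pos {f f' : ℝ → ℝ} {D : Set ℝ} (hD : Convex ℝ D)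
    (hf : ∀ x ∈ D, HasDerivAt f (f' x) x) (hf' : ∀ x ∈ interior D, 0 < f' x) :
    StrictMonoOn f D :=
  strictMonoOn_of_deriv_pos hD (fun x hx => (hf x hx).continuousAt.continuousWithinAt)
    fun x hx => by rw [(hf x (interior_subset hx)).deriv]; exact hf' x hx

theorem stmt_7_general (a b c d : ℝ) (ha : 0 < a) (hb : 0 ≤ b)
    (y y' y'' : ℝ → ℝ)
    (hy : ∀ x ∈ Ioi (0:ℝ), HasDerivAt y (y' x) x)
    (hy' : ∀ x ∈ Ioi (0:ℝ), HasDerivAt y' (y'' x) x)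
    (hode : ∀ x ∈ Ioi (0:ℝ),
      x ^ 2 * y'' x + (c * x + d) * y' x - (a * x + b) * y x = 0)
    (x₂ : ℝ) (hx₂ : 0 < x₂) (hpos : 0 < y x₂) (hneg : 0 < y' x₂) :
    (∀ x ∈ Ici x₂, 0 < y x) ∧ StrictMonoOn y (Ici x₂) := by
  have hy'_pos : ∀ x ∈ Ici x₂, 0 < y' x := by
    refine pos_on_Ici_of_hasDerivAt_pos_at_first_zero (g' := y'')
      (fun x hx => (hy' x (hx₂.trans_le hx)).continuousAt.continuousWithinAt) hneg ?_
    intro t hx₂t hy't hy'_pos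
    have ht : 0 < t := hx₂.trans hx₂t
    have hmono : StrictMonoOn y (Icc x₂ t) :=
      strictMonoOn_of_hasDerivAt_pos (convex_Icc x₂ t) (fun x hx => hy x (hx₂.trans_le hx.1))
        fun x hx => hy'_pos x (Ioo_subset_Ico_self (by rwa [interior_Icc] at hx))
    have hyt : 0 < y t := hpos.trans (hmono (left_mem_Icc.mpr hx₂t.le)
      (right_mem_Icc.mpr hx₂t.le) hx₂t)
    have hy''t : t ^ 2 * y'' t = (a * t + b) * y t := by
      linear_combination hode t ht - (c * t + d) * hy't
    exact ⟨hy' t ht, pos_of_mul_pos_right (hy''t ▸ mul_pos (by positivity) hyt) (sq_nonneg t)⟩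
  have hmono : StrictMonoOn y (Ici x₂) :=
    strictMonoOn_of_hasDerivAt_pos (convex_Ici x₂) (fun x hx => hy x (hx₂.trans_le hx))
      fun x hx => hy'_pos x (interior_subset hx)
  exact ⟨fun x hx => hpos.trans_le (hmono.monotoneOn self_mem_Ici hx hx), hmono⟩

theorem stmt_7 (a b c d : ℝ) (ha : 0 < a) (hb : 0 ≤ b) (hd : 0 < d)
    (y y' y'' : ℝ → ℝ)
    (hy : ∀ x ∈ Ioi (0:ℝ), HasDerivAt y (y' x) x)
    (hy' : ∀ x ∈ Ioi (0:ℝ), HasDerivAt y' (y'' x) x)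
    (hy''cont : ContinuousOn y'' (Ioi (0:ℝ)))
    (hode : ∀ x ∈ Ioi (0:ℝ),
      x ^ 2 * y'' x + (c * x + d) * y' x - (a * x + b) * y x = 0)
    (x₂ : ℝ) (hx₂ : 0 < x₂) (hpos : 0 < y x₂) (hneg : 0 < y' x₂) :
    (∀ x ∈ Ici x₂, 0 < y x) ∧ StrictMonoOn y (Ici x₂) :=
  stmt_7_general a b c d ha hb y y' y'' hy hy' hode x₂ hx₂ hpos hneg
end

section
/- Let c, d ∈ ℝ. If q : (0, ∞) → ℝ is twice continuously differentiable and satisfies x² q''(x) + (c x + d) q'(x) − (a x + b) q(x) = 0, and u(x) := exp(−d/x) x^{c−2} q(x), then u satisfies x² u''(x) + ((4 − c) x − d) u'(x) − (a x + b + c − 2) u(x) = 0 on (0, ∞). -/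
/-!
Write `u = w q` with `w x = exp (-d/x) x^(c-2)`, whose logarithmic derivative is
`g x = d/x² + (c-2)/x`. Then `u' = w (g q + q')` and `u'' = w ((g² + g') q + 2 g q' + q'')`, and
since `x² · 2g + (4 - c) x - d = c x + d` and `x² (g² + g') + ((4 - c) x - d) g = c - 2`, the
left-hand side of the equation for `u` is `w` times that of the equation for `q`.
-/

open Set Real

section GaugeTransform

variable {s : Set ℝ} {w g g' q u : ℝ → ℝ}

theorem ContDiffOn.hasDerivAt_deriv_of_isOpen (hq : ContDiffOn ℝ 2 q s) (hs : IsOpen s)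
    {x : ℝ} (hx : x ∈ s) : HasDerivAt (deriv q) (deriv (deriv q) x) x :=
  (((hq.deriv_of_isOpen hs (m := 1) (by norm_num)).contDiffAt (hs.mem_nhds hx)).differentiableAt
    one_ne_zero).hasDerivAt

theorem ContDiffOn.hasDerivAt_of_isOpen (hq : ContDiffOn ℝ 2 q s) (hs : IsOpen s)
    {x : ℝ} (hx : x ∈ s) : HasDerivAt q (deriv q x) x :=
  ((hq.contDiffAt (hs.mem_nhds hx)).differentiableAt two_ne_zero).hasDerivAt

variable (hs : IsOpen s) (hw : ∀ x ∈ s, HasDerivAt w (w x * g x) x)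
  (hu : ∀ x ∈ s, u x = w x * q x)
include hs hw hu

theorem deriv_eq_of_eqOn_mul_of_hasDerivAt (hq : ∀ x ∈ s, HasDerivAt q (deriv q x) x)
    {x : ℝ} (hx : x ∈ s) : deriv u x = w x * (g x * q x + deriv q x) := by
  have hux : u =ᶠ[nhds x] fun y => w y * q y :=
    Filter.eventually_of_mem (hs.mem_nhds hx) hu
  rw [hux.deriv_eq]
  exact ((hw x hx).mul (hq x hx)).deriv.trans (by ring)

theorem deriv_deriv_eq_of_eqOn_mul_of_hasDerivAt (hg : ∀ x ∈ s, HasDerivAt g (g' x) x)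
    (hq : ContDiffOn ℝ 2 q s) {x : ℝ} (hx : x ∈ s) :
    deriv (deriv u) x =
      w x * ((g x ^ 2 + g' x) * q x + 2 * g x * deriv q x + deriv (deriv q) x) := by
  have hu' : deriv u =ᶠ[nhds x] fun y => w y * (g y * q y + deriv q y) :=
    Filter.eventually_of_mem (hs.mem_nhds hx) fun y hy =>
      deriv_eq_of_eqOn_mul_of_hasDerivAt hs hw hu (fun z hz => hq.hasDerivAt_of_isOpen hs hz) hy
  rw [hu'.deriv_eq]
  exact ((hw x hx).mul (((hg x hx).mul (hq.hasDerivAt_of_isOpen hs hx)).add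
    (hq.hasDerivAt_deriv_of_isOpen hs hx))).deriv.trans
      (by simp only [Pi.add_apply, Pi.mul_apply]; ring)

end GaugeTransform

theorem hasDerivAt_exp_neg_div_mul_rpow (c d : ℝ) {x : ℝ} (hx : 0 < x) :
    HasDerivAt (fun y => exp (-(d / y)) * y ^ (c - 2))
      (exp (-(d / x)) * x ^ (c - 2) * (d / x ^ 2 + (c - 2) / x)) x := by
  have hdiv : HasDerivAt (fun y => -(d / y)) (d / x ^ 2) x := by
    have h := (hasDerivAt_inv hx.ne').const_mul (-d)
    rw [show (fun y => -d * y⁻¹) = fun y => -(d / y) by ext; ring] at h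
    exact h.congr_deriv (by ring)
  refine (hdiv.exp.mul (hasDerivAt_rpow_const (p := c - 2) (Or.inl hx.ne'))).congr_deriv ?_
  rw [rpow_sub_one hx.ne']
  field_simp

theorem hasDerivAt_div_sq_add_div (c d : ℝ) {x : ℝ} (hx : x ≠ 0) :
    HasDerivAt (fun y => d / y ^ 2 + (c - 2) / y) (-(2 * d) / x ^ 3 - (c - 2) / x ^ 2) x := by
  have h := (((hasDerivAt_pow 2 x).inv (pow_ne_zero 2 hx)).const_mul d).add
    ((hasDerivAt_inv hx).const_mul (c - 2))
  have hfun : (fun y => d / y ^ 2 + (c - 2) / y)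
      = (fun y => d * (fun x => x ^ 2)⁻¹ y) + fun y => (c - 2) * y⁻¹ := by
    ext y
    simp only [Pi.add_apply, Pi.inv_apply]
    ring
  rw [hfun]
  exact h.congr_deriv (by field_simp; ring)

theorem gauge_transform_identity (a b c d q q' q'' : ℝ) {x : ℝ} (hx : x ≠ 0) :
    let g := d / x ^ 2 + (c - 2) / x
    let g' := -(2 * d) / x ^ 3 - (c - 2) / x ^ 2
    x ^ 2 * ((g ^ 2 + g') * q + 2 * g * q' + q'') + ((4 - c) * x - d) * (g * q + q')
        - (a * x + b + c - 2) * q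
      = x ^ 2 * q'' + (c * x + d) * q' - (a * x + b) * q := by
  intro g g'
  simp only [g, g']
  field_simp
  ring

/-- the gauge transformation `u(x) = e^{−d/x} x^{c−2} q(x)` of a solution of
`x² q'' + (cx+d) q' − (ax+b) q = 0` satisfies
`x² u'' + ((4−c)x − d) u' − (ax + b + c − 2) u = 0` on `(0,∞)`. -/
theorem stmt_10 (a b c d : ℝ) (q : ℝ → ℝ)
    (hq : ContDiffOn ℝ 2 q (Ioi (0:ℝ)))
    (hode : ∀ x ∈ Ioi (0:ℝ),
      x ^ 2 * deriv (deriv q) x + (c * x + d) * deriv q x - (a * x + b) * q x = 0)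
    (u : ℝ → ℝ)
    (hu : ∀ x ∈ Ioi (0:ℝ), u x = Real.exp (-(d / x)) * x ^ (c - 2) * q x) :
    ∀ x ∈ Ioi (0:ℝ),
      x ^ 2 * deriv (deriv u) x + ((4 - c) * x - d) * deriv u x
        - (a * x + b + c - 2) * u x = 0 := by
  intro x hx
  have hw : ∀ y ∈ Ioi (0:ℝ), HasDerivAt (fun y => exp (-(d / y)) * y ^ (c - 2))
      (exp (-(d / y)) * y ^ (c - 2) * (d / y ^ 2 + (c - 2) / y)) y :=
    fun y hy => hasDerivAt_exp_neg_div_mul_rpow c d hy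
  have hg : ∀ y ∈ Ioi (0:ℝ), HasDerivAt (fun y => d / y ^ 2 + (c - 2) / y)
      (-(2 * d) / y ^ 3 - (c - 2) / y ^ 2) y :=
    fun y hy => hasDerivAt_div_sq_add_div c d (ne_of_gt hy)
  rw [deriv_deriv_eq_of_eqOn_mul_of_hasDerivAt isOpen_Ioi hw hu hg hq hx,
    deriv_eq_of_eqOn_mul_of_hasDerivAt isOpen_Ioi hw hu
      (fun y hy => hq.hasDerivAt_of_isOpen isOpen_Ioi hy) hx, hu x hx]
  linear_combination (exp (-(d / x)) * x ^ (c - 2)) *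
    (gauge_transform_identity a b c d (q x) (deriv q x) (deriv (deriv q) x) (ne_of_gt hx)
      |>.trans (hode x hx))
end

section
/- Let μ ≠ 0 and C ∈ ℝ. The function Z(t) = −(1/μ)(1 + W(e^{−Cμ² − μ² t − 1})), where W is the principal branch of the Lambert W function, satisfies the ODE Z'(t) = μ + 1/Z(t) on any interval where Z(t) ≠ 0. -/
open Real

/- Along `x = exp (f t)` the factor `x` in `W' x = W x / (x (1 + W x))` cancels against the
derivative of the exponential, so `d/dt W (exp (f t)) = W/(1 + W) · f' t`. With `f` affine of
slope `-μ²` and `Z = -(1 + W)/μ` this is `Z' = μ W/(1 + W) = μ - μ/(1 + W) = μ + 1/Z`. -/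

theorem hasDerivAt_comp_exp_of_lambert_deriv {W f : ℝ → ℝ} {f' t : ℝ}
    (hW' : HasDerivAt W (W (exp (f t)) / (exp (f t) * (1 + W (exp (f t))))) (exp (f t)))
    (hf : HasDerivAt f f' t) :
    HasDerivAt (fun s => W (exp (f s))) (W (exp (f t)) / (1 + W (exp (f t))) * f') t := by
  refine (hW'.comp t hf.exp).congr_deriv ?_
  field_simp [(exp_pos (f t)).ne']

theorem neg_inv_mul_div_one_add_mul_neg_sq {μ w : ℝ} (hw : 1 + w ≠ 0) :
    -(1 / μ) * (w / (1 + w) * -μ ^ 2) = μ + 1 / (-(1 / μ) * (1 + w)) := by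
  rcases eq_or_ne μ 0 with rfl | hμ
  · simp
  · field_simp
    ring

theorem stmt_16_general (μ C : ℝ) (W : ℝ → ℝ)
    (hW' : ∀ x ∈ Set.Ioi (0:ℝ), HasDerivAt W (W x / (x * (1 + W x))) x)
    (Z : ℝ → ℝ)
    (hZ : ∀ t : ℝ, Z t = -(1/μ) * (1 + W (Real.exp (-C * μ^2 - μ^2 * t - 1)))) :
    ∀ t : ℝ, Z t ≠ 0 → HasDerivAt Z (μ + 1 / Z t) t := by
  intro t hZt
  have hw : 1 + W (exp (-C * μ ^ 2 - μ ^ 2 * t - 1)) ≠ 0 := by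
    rintro hw
    exact hZt (by rw [hZ t, hw, mul_zero])
  have hf : HasDerivAt (fun s => -C * μ ^ 2 - μ ^ 2 * s - 1) (-μ ^ 2) t :=
    ((((hasDerivAt_id' t).const_mul (μ ^ 2)).const_sub (-C * μ ^ 2)).sub_const 1).congr_deriv
      (by ring)
  have hW_comp := hasDerivAt_comp_exp_of_lambert_deriv (hW' _ (exp_pos _)) hf
  rw [hZ t, ← neg_inv_mul_div_one_add_mul_neg_sq hw, funext hZ]
  exact (hW_comp.const_add 1).const_mul _

/-- with `W` the principal branch of the Lambert W function (characterized
on `(0,∞)` by `W(x) e^{W(x)} = x` and `W'(x) = W(x)/(x(1+W(x)))`), the function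
`Z(t) = −(1/μ)(1 + W(e^{−Cμ² − μ²t − 1}))` satisfies `Z'(t) = μ + 1/Z(t)` wherever
`Z(t) ≠ 0`. -/
theorem stmt_16 (μ C : ℝ) (hμ : μ ≠ 0) (W : ℝ → ℝ)
    (hW : ∀ x ∈ Set.Ioi (0:ℝ), W x * Real.exp (W x) = x)
    (hW' : ∀ x ∈ Set.Ioi (0:ℝ), HasDerivAt W (W x / (x * (1 + W x))) x)
    (Z : ℝ → ℝ)
    (hZ : ∀ t : ℝ, Z t = -(1/μ) * (1 + W (Real.exp (-C * μ^2 - μ^2 * t - 1)))) :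
    ∀ t : ℝ, Z t ≠ 0 → HasDerivAt Z (μ + 1 / Z t) t :=
  stmt_16_general μ C W hW' Z hZ
end

section
/- Let a > 0, b > 0, c ∈ ℝ, d < 0, v > 0. Let y₁, y₂ : (0, ∞) → ℝ be positive solutions of the homogeneous equation x² y'' + (c x + d) y' − (a x + b) y = 0 with Wronskian y₁ y₂' − y₁' y₂ = −v x^{−c} e^{d/x}. Assume the bounds: y₂(t) ≤ C t^{1/4 − c/2} e^{−2√(a t)} for t ≥ t₀ and y₁(t) ≤ C t^{2−c} e^{d/t} for 0 < t ≤ t₀. Let f be bounded continuous on (0, ∞). Then both integrals ∫_x^∞ y₂(t) f(t) / (t² W(t)) dt and ∫_0^x y₁(t) f(t) / (t² W(t)) dt converge absolutely for every x > 0, where W(t) = −v t^{−c} e^{d/t}, and consequently y(x) = (∫_x^∞ y₂ f/(t²W) dt) y₁(x) + (∫_0^x y₁ f/(t²W) dt) y₂(x) is a well-defined solution of x² y'' + (c x + d) y' − (a x + b) y = f(x) on (0, ∞). -/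
/-!
Variation of parameters: if `A' = -y₂ f / (x² W)` and `B' = y₁ f / (x² W)`, then
`(A y₁ + B y₂)' = A y₁' + B y₂'`, and in the second derivative the extra terms `A' y₁' + B' y₂'`
add up to `f / x²` by the definition of the Wronskian, so `A y₁ + B y₂` solves the
inhomogeneous equation. Everything hinges on the two integrals defining
`A` and `B` converging. Since `1 / |x² W(x)| = x^(c-2) e^(-d/x) / v`, the bound on `y₁` near `0`
makes the kernel of `B` bounded there, while the bound on `y₂` makes the kernel of `A` of size
`x^(c/2 - 7/4) e^(-2√(a x))`, which is `o(x⁻²)` at infinity.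
-/

open Set Real MeasureTheory Filter Asymptotics

lemma isLittleO_rpow_mul_exp_neg_mul_sqrt_atTop (p q : ℝ) {A : ℝ} (hA : 0 < A) :
    (fun t : ℝ => t ^ p * exp (-(A * √t))) =o[atTop] fun t => t ^ q := by
  have hsqrt : (fun t : ℝ => √t ^ (2 * (p - q))) =o[atTop] fun t => exp (A * √t) :=
    (isLittleO_rpow_exp_pos_mul_atTop (2 * (p - q)) hA).comp_tendsto tendsto_sqrt_atTop
  refine (hsqrt.mul_isBigO (isBigO_refl (fun t : ℝ => t ^ q * exp (-(A * √t))) atTop)).congr'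
    ?_ ?_
  · filter_upwards [eventually_gt_atTop 0] with t ht
    rw [sqrt_eq_rpow, ← rpow_mul ht.le, ← mul_assoc, ← rpow_add ht]
    congr 2
    ring
  · filter_upwards with t
    rw [mul_left_comm, ← exp_add, add_neg_cancel, exp_zero, mul_one]

lemma integrableOn_Ioc_zero_of_continuousOn_of_bound {g : ℝ → ℝ} (hg : ContinuousOn g (Ioi 0))
    {t₀ K : ℝ} (ht₀ : 0 < t₀) (hK : ∀ t ∈ Ioc 0 t₀, |g t| ≤ K) (x : ℝ) :
    IntegrableOn g (Ioc 0 x) := by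
  have hnear : IntegrableOn g (Ioc 0 t₀) :=
    IntegrableOn.of_bound measure_Ioc_lt_top
      ((hg.mono fun _ ht => ht.1).aestronglyMeasurable measurableSet_Ioc) K
      ((ae_restrict_mem measurableSet_Ioc).mono hK)
  have hfar : IntegrableOn g (Icc t₀ x) :=
    (hg.mono fun _ ht => ht₀.trans_le ht.1).integrableOn_Icc
  refine (hnear.union hfar).mono_set fun t ht => ?_
  rcases le_total t t₀ with h | h
  exacts [Or.inl ⟨ht.1, h⟩, Or.inr ⟨h, ht.2⟩]

lemma integrableOn_Ioi_of_continuousOn_of_isBigO_rpow {g : ℝ → ℝ} (hg : ContinuousOn g (Ioi 0))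
    {s : ℝ} (ho : g =O[atTop] fun t => t ^ s) (hs : s < -1) {x : ℝ} (hx : 0 < x) :
    IntegrableOn g (Ioi x) :=
  ((hg.mono fun _ ht => hx.trans_le ht).locallyIntegrableOn measurableSet_Ici
    |>.integrableOn_of_isBigO_atTop ho (integrableAtFilter_rpow_atTop_iff.2 hs)).mono_set
    Ioi_subset_Ici_self

section Primitive

variable {E : Type*} [NormedAddCommGroup E] [NormedSpace ℝ E] [CompleteSpace E] {f : ℝ → E}
  {a x : ℝ}

lemma hasDerivAt_setIntegral_Ioi (hf : IntegrableOn f (Ioi a)) (hfc : ContinuousOn f (Ioi a))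
    (hx : a < x) : HasDerivAt (fun u => ∫ t in Ioi u, f t) (-f x) x := by
  have hFTC : HasDerivAt (fun u => ∫ t in a..u, f t) (f x) x :=
    intervalIntegral.integral_hasDerivAt_right
      ((intervalIntegrable_iff_integrableOn_Ioc_of_le hx.le).2 (hf.mono_set Ioc_subset_Ioi_self))
      (hfc.stronglyMeasurableAtFilter isOpen_Ioi x hx) (hfc.continuousAt (Ioi_mem_nhds hx))
  refine (hFTC.const_sub (∫ t in Ioi a, f t)).congr_of_eventuallyEq ?_
  filter_upwards [Ioi_mem_nhds hx] with u hu
  rw [← intervalIntegral.integral_Ioi_sub_Ioi hf hu.le, sub_sub_cancel]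

lemma hasDerivAt_setIntegral_Ioc (hf : ∀ b, IntegrableOn f (Ioc a b))
    (hfc : ContinuousOn f (Ioi a)) (hx : a < x) :
    HasDerivAt (fun u => ∫ t in Ioc a u, f t) (f x) x := by
  have hFTC : HasDerivAt (fun u => ∫ t in a..u, f t) (f x) x :=
    intervalIntegral.integral_hasDerivAt_right
      ((intervalIntegrable_iff_integrableOn_Ioc_of_le hx.le).2 (hf x))
      (hfc.stronglyMeasurableAtFilter isOpen_Ioi x hx) (hfc.continuousAt (Ioi_mem_nhds hx))
  refine hFTC.congr_of_eventuallyEq ?_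
  filter_upwards [Ioi_mem_nhds hx] with u hu
  exact (intervalIntegral.integral_of_le hu.le).symm

end Primitive

theorem variation_of_parameters {U : Set ℝ} (hU : IsOpen U)
    {α β γ f W y₁ y₁' y₁'' y₂ y₂' y₂'' A B y : ℝ → ℝ}
    (hy₁ : ∀ x ∈ U, HasDerivAt y₁ (y₁' x) x) (hy₁' : ∀ x ∈ U, HasDerivAt y₁' (y₁'' x) x)
    (hy₂ : ∀ x ∈ U, HasDerivAt y₂ (y₂' x) x) (hy₂' : ∀ x ∈ U, HasDerivAt y₂' (y₂'' x) x)
    (hode₁ : ∀ x ∈ U, α x * y₁'' x + β x * y₁' x - γ x * y₁ x = 0)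
    (hode₂ : ∀ x ∈ U, α x * y₂'' x + β x * y₂' x - γ x * y₂ x = 0)
    (hW : ∀ x ∈ U, y₁ x * y₂' x - y₁' x * y₂ x = W x) (hW₀ : ∀ x ∈ U, α x * W x ≠ 0)
    (hA : ∀ x ∈ U, HasDerivAt A (-(y₂ x * f x / (α x * W x))) x)
    (hB : ∀ x ∈ U, HasDerivAt B (y₁ x * f x / (α x * W x)) x)
    (hy : ∀ x ∈ U, y x = A x * y₁ x + B x * y₂ x) :
    ∀ x ∈ U, α x * deriv (deriv y) x + β x * deriv y x - γ x * y x = f x := by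
  have hy_deriv : ∀ x ∈ U, HasDerivAt y (A x * y₁' x + B x * y₂' x) x := by
    intro x hx
    -- the terms `A' y₁ + B' y₂` cancel
    exact ((((hA x hx).mul (hy₁ x hx)).add ((hB x hx).mul (hy₂ x hx))).congr_of_eventuallyEq
      (eventually_of_mem (hU.mem_nhds hx) hy)).congr_deriv (by ring)
  have hy_deriv2 : ∀ x ∈ U, HasDerivAt (deriv y)
      (-(y₂ x * f x / (α x * W x)) * y₁' x + A x * y₁'' x
        + (y₁ x * f x / (α x * W x) * y₂' x + B x * y₂'' x)) x := fun x hx =>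
    (((hA x hx).mul (hy₁' x hx)).add ((hB x hx).mul (hy₂' x hx))).congr_of_eventuallyEq
      (eventually_of_mem (hU.mem_nhds hx) fun u hu => (hy_deriv u hu).deriv)
  intro x hx
  have hforcing :
      α x * (y₁ x * f x / (α x * W x) * y₂' x - y₂ x * f x / (α x * W x) * y₁' x) = f x :=
    calc _ = f x * (α x * W x) / (α x * W x) := by rw [← hW x hx]; ring
      _ = f x := mul_div_cancel_right₀ _ (hW₀ x hx)
  rw [(hy_deriv2 x hx).deriv, (hy_deriv x hx).deriv, hy x hx]
  linear_combination A x * hode₁ x hx + B x * hode₂ x hx + hforcing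

section HeunWronskian

variable {c d v : ℝ} {W : ℝ → ℝ}

lemma continuousOn_sq_mul_of_eqOn (hW : ∀ t ∈ Ioi (0:ℝ), W t = -v * t ^ (-c) * exp (d / t)) :
    ContinuousOn (fun t => t ^ 2 * W t) (Ioi 0) := by
  refine ContinuousOn.congr (f := fun t => t ^ 2 * (-v * t ^ (-c) * exp (d / t))) ?_
    fun t ht => by rw [hW t ht]
  refine (continuousOn_pow 2).mul (continuousOn_const.mul ?_ |>.mul ?_)
  · exact fun t ht => (continuousAt_rpow_const t (-c) (Or.inl (ne_of_gt ht))).continuousWithinAt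
  · exact continuous_exp.comp_continuousOn
      (continuousOn_const.div continuousOn_id fun t ht => ne_of_gt ht)

lemma abs_div_sq_mul_of_eqOn (hv : 0 < v)
    (hW : ∀ t ∈ Ioi (0:ℝ), W t = -v * t ^ (-c) * exp (d / t)) {t : ℝ} (ht : 0 < t) (p : ℝ) :
    |p / (t ^ 2 * W t)| = |p| * (t ^ (c - 2) * exp (-(d / t))) / v := by
  have hpow : t ^ (c - 2) * (t ^ 2 * t ^ (-c)) = 1 := by
    rw [← rpow_natCast, ← rpow_add ht, ← rpow_add ht]
    push_cast
    ring_nf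
    exact rpow_zero t
  have hden : t ^ 2 * W t = -(v * (t ^ 2 * t ^ (-c)) * exp (d / t)) := by rw [hW t ht]; ring
  have hpos : 0 < v * (t ^ 2 * t ^ (-c)) * exp (d / t) := by
    have := rpow_pos_of_pos ht (-c)
    positivity
  rw [abs_div, hden, abs_neg, abs_of_pos hpos, exp_neg, eq_inv_of_mul_eq_one_left hpow]
  ring

lemma sq_mul_ne_zero_of_eqOn (hv : 0 < v)
    (hW : ∀ t ∈ Ioi (0:ℝ), W t = -v * t ^ (-c) * exp (d / t)) {t : ℝ} (ht : 0 < t) :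
    t ^ 2 * W t ≠ 0 := by
  rw [hW t ht]
  exact mul_ne_zero (pow_ne_zero 2 ht.ne')
    (mul_ne_zero (mul_ne_zero (neg_ne_zero.2 hv.ne') (rpow_pos_of_pos ht _).ne') (exp_pos _).ne')

lemma abs_mul_div_sq_mul_le_of_le_near_zero (hv : 0 < v)
    (hW : ∀ t ∈ Ioi (0:ℝ), W t = -v * t ^ (-c) * exp (d / t)) {t u φ Cb M : ℝ} (ht : 0 < t)
    (hu₀ : 0 ≤ u) (hu : u ≤ Cb * t ^ (2 - c) * exp (d / t)) (hφ : |φ| ≤ M) :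
    |u * φ / (t ^ 2 * W t)| ≤ Cb * M / v := by
  have hpow : t ^ (2 - c) * t ^ (c - 2) = 1 := by
    rw [← rpow_add ht, show 2 - c + (c - 2) = 0 by ring, rpow_zero]
  have hexp : exp (d / t) * exp (-(d / t)) = 1 := by rw [← exp_add, add_neg_cancel, exp_zero]
  calc |u * φ / (t ^ 2 * W t)|
      = u * |φ| * (t ^ (c - 2) * exp (-(d / t))) / v := by
        rw [abs_div_sq_mul_of_eqOn hv hW ht, abs_mul, abs_of_nonneg hu₀]
    _ ≤ Cb * t ^ (2 - c) * exp (d / t) * M * (t ^ (c - 2) * exp (-(d / t))) / v := by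
        gcongr
        exact hu₀.trans hu
    _ = Cb * M / v := by
        rw [show Cb * t ^ (2 - c) * exp (d / t) * M * (t ^ (c - 2) * exp (-(d / t)))
          = Cb * M * (t ^ (2 - c) * t ^ (c - 2)) * (exp (d / t) * exp (-(d / t))) by ring,
          hpow, hexp, mul_one, mul_one]

lemma abs_mul_div_sq_mul_le_of_le_atTop (hv : 0 < v)
    (hW : ∀ t ∈ Ioi (0:ℝ), W t = -v * t ^ (-c) * exp (d / t)) (hd : d < 0) {a t₀ t u φ Cb M : ℝ}
    (ha : 0 ≤ a) (ht₀ : 0 < t₀) (ht : t₀ ≤ t) (hu₀ : 0 ≤ u)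
    (hu : u ≤ Cb * t ^ ((1:ℝ) / 4 - c / 2) * exp (-(2 * √(a * t)))) (hφ : |φ| ≤ M) :
    |u * φ / (t ^ 2 * W t)|
      ≤ Cb * M * exp (-(d / t₀)) / v * (t ^ (c / 2 - 7 / 4) * exp (-(2 * √a * √t))) := by
  have ht0 : 0 < t := ht₀.trans_le ht
  have hpow : t ^ ((1:ℝ) / 4 - c / 2) * t ^ (c - 2) = t ^ (c / 2 - 7 / 4) := by
    rw [← rpow_add ht0]
    ring_nf
  have hexp : exp (-(d / t)) ≤ exp (-(d / t₀)) := by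
    rw [exp_le_exp, ← neg_div, ← neg_div]
    gcongr
    linarith
  calc |u * φ / (t ^ 2 * W t)|
      = u * |φ| * (t ^ (c - 2) * exp (-(d / t))) / v := by
        rw [abs_div_sq_mul_of_eqOn hv hW ht0, abs_mul, abs_of_nonneg hu₀]
    _ ≤ u * |φ| * (t ^ (c - 2) * exp (-(d / t₀))) / v := by gcongr
    _ ≤ Cb * t ^ ((1:ℝ) / 4 - c / 2) * exp (-(2 * √(a * t))) * M
          * (t ^ (c - 2) * exp (-(d / t₀))) / v := by
        gcongr
        exact hu₀.trans hu
    _ = Cb * M * exp (-(d / t₀)) / v * (t ^ (c / 2 - 7 / 4) * exp (-(2 * √a * √t))) := by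
        rw [← hpow, sqrt_mul ha, mul_assoc 2]
        ring

lemma isBigO_mul_div_sq_mul_atTop (hv : 0 < v)
    (hW : ∀ t ∈ Ioi (0:ℝ), W t = -v * t ^ (-c) * exp (d / t)) (hd : d < 0) {a t₀ Cb M : ℝ}
    {u φ : ℝ → ℝ} (ha : 0 < a) (ht₀ : 0 < t₀) (hu₀ : ∀ t ∈ Ioi (0:ℝ), 0 < u t)
    (hu : ∀ t ≥ t₀, u t ≤ Cb * t ^ ((1:ℝ) / 4 - c / 2) * exp (-(2 * √(a * t))))
    (hφ : ∀ t ∈ Ioi (0:ℝ), |φ t| ≤ M) :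
    (fun t => u t * φ t / (t ^ 2 * W t)) =O[atTop] fun t => t ^ (-2 : ℝ) := by
  refine IsBigO.trans ?_ (isLittleO_rpow_mul_exp_neg_mul_sqrt_atTop (c / 2 - 7 / 4) (-2)
    (by positivity : 0 < 2 * √a)).isBigO
  refine IsBigO.of_bound (Cb * M * exp (-(d / t₀)) / v) ?_
  filter_upwards [eventually_ge_atTop t₀] with t ht
  have ht0 : 0 < t := ht₀.trans_le ht
  rw [norm_eq_abs, norm_of_nonneg (by positivity)]
  exact abs_mul_div_sq_mul_le_of_le_atTop hv hW hd ha.le ht₀ ht (hu₀ t ht0).le (hu t ht) (hφ t ht0)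

end HeunWronskian

theorem stmt_19_general (a b c d v : ℝ) (ha : 0 < a) (hd : d < 0) (hv : 0 < v)
    (y₁ y₁' y₁'' y₂ y₂' y₂'' : ℝ → ℝ)
    (hy₁ : ∀ x ∈ Ioi (0:ℝ), HasDerivAt y₁ (y₁' x) x)
    (hy₁' : ∀ x ∈ Ioi (0:ℝ), HasDerivAt y₁' (y₁'' x) x)
    (hy₂ : ∀ x ∈ Ioi (0:ℝ), HasDerivAt y₂ (y₂' x) x)
    (hy₂' : ∀ x ∈ Ioi (0:ℝ), HasDerivAt y₂' (y₂'' x) x)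
    (hy₁pos : ∀ x ∈ Ioi (0:ℝ), 0 < y₁ x)
    (hy₂pos : ∀ x ∈ Ioi (0:ℝ), 0 < y₂ x)
    (hode₁ : ∀ x ∈ Ioi (0:ℝ),
      x ^ 2 * y₁'' x + (c * x + d) * y₁' x - (a * x + b) * y₁ x = 0)
    (hode₂ : ∀ x ∈ Ioi (0:ℝ),
      x ^ 2 * y₂'' x + (c * x + d) * y₂' x - (a * x + b) * y₂ x = 0)
    (hWr : ∀ x ∈ Ioi (0:ℝ),
      y₁ x * y₂' x - y₁' x * y₂ x = -v * x ^ (-c) * Real.exp (d / x))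
    (Cb t₀ : ℝ) (ht₀ : 0 < t₀)
    (hbd₂ : ∀ t ≥ t₀, y₂ t ≤ Cb * t ^ ((1:ℝ)/4 - c/2) * Real.exp (-(2 * Real.sqrt (a * t))))
    (hbd₁ : ∀ t ∈ Ioc (0:ℝ) t₀, y₁ t ≤ Cb * t ^ ((2:ℝ) - c) * Real.exp (d / t))
    (f : ℝ → ℝ) (hfb : ∃ M : ℝ, ∀ x ∈ Ioi (0:ℝ), |f x| ≤ M)
    (hfc : ContinuousOn f (Ioi (0:ℝ)))
    (W : ℝ → ℝ) (hW : ∀ t ∈ Ioi (0:ℝ), W t = -v * t ^ (-c) * Real.exp (d / t))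
    (y : ℝ → ℝ)
    (hy : ∀ x ∈ Ioi (0:ℝ),
      y x = (∫ t in Ioi x, y₂ t * f t / (t ^ 2 * W t)) * y₁ x
            + (∫ t in Ioc (0:ℝ) x, y₁ t * f t / (t ^ 2 * W t)) * y₂ x) :
    (∀ x ∈ Ioi (0:ℝ),
        IntegrableOn (fun t => y₂ t * f t / (t ^ 2 * W t)) (Ioi x) ∧
        IntegrableOn (fun t => y₁ t * f t / (t ^ 2 * W t)) (Ioc (0:ℝ) x)) ∧
      ∀ x ∈ Ioi (0:ℝ),
        x ^ 2 * deriv (deriv y) x + (c * x + d) * deriv y x - (a * x + b) * y x = f x := by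
  obtain ⟨M, hM⟩ := hfb
  have hkernel : ∀ u : ℝ → ℝ, ContinuousOn u (Ioi 0) →
      ContinuousOn (fun t => u t * f t / (t ^ 2 * W t)) (Ioi 0) := fun u hu =>
    (hu.mul hfc).div (continuousOn_sq_mul_of_eqOn hW) fun t ht => sq_mul_ne_zero_of_eqOn hv hW ht
  have hg₁ := hkernel y₁ fun x hx => (hy₁ x hx).continuousAt.continuousWithinAt
  have hg₂ := hkernel y₂ fun x hx => (hy₂ x hx).continuousAt.continuousWithinAt
  have hint₁ : ∀ x, IntegrableOn (fun t => y₁ t * f t / (t ^ 2 * W t)) (Ioc 0 x) :=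
    integrableOn_Ioc_zero_of_continuousOn_of_bound hg₁ ht₀ fun t ht =>
      abs_mul_div_sq_mul_le_of_le_near_zero hv hW ht.1 (hy₁pos t ht.1).le (hbd₁ t ht) (hM t ht.1)
  have hint₂ : ∀ x ∈ Ioi (0:ℝ), IntegrableOn (fun t => y₂ t * f t / (t ^ 2 * W t)) (Ioi x) :=
    fun x hx => integrableOn_Ioi_of_continuousOn_of_isBigO_rpow hg₂
      (isBigO_mul_div_sq_mul_atTop hv hW hd ha ht₀ hy₂pos hbd₂ hM) (by norm_num) hx
  refine ⟨fun x hx => ⟨hint₂ x hx, hint₁ x⟩, ?_⟩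
  refine variation_of_parameters (α := fun x => x ^ 2) isOpen_Ioi hy₁ hy₁' hy₂ hy₂' hode₁ hode₂
    (fun x hx => (hWr x hx).trans (hW x hx).symm) (fun x hx => sq_mul_ne_zero_of_eqOn hv hW hx)
    (fun x hx => ?_) (fun x hx => hasDerivAt_setIntegral_Ioc hint₁ hg₁ hx) hy
  have hx₂ : 0 < x / 2 := half_pos hx
  exact hasDerivAt_setIntegral_Ioi (hint₂ _ hx₂) (hg₂.mono (Ioi_subset_Ioi hx₂.le))
    (half_lt_self hx)

/-- variation-of-parameters solution of the inhomogeneous doubly-confluent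
Heun equation `x² y'' + (cx+d) y' − (ax+b) y = f`. Under the stated growth bounds on the
positive homogeneous solutions `y₁`, `y₂` with Wronskian `W(x) = −v x^{−c} e^{d/x}`, both
kernel integrals converge absolutely, and
`y(x) = (∫_x^∞ y₂ f/(t²W)) y₁(x) + (∫_0^x y₁ f/(t²W)) y₂(x)` solves the equation. -/
theorem stmt_19 (a b c d v : ℝ) (ha : 0 < a) (hb : 0 < b) (hd : d < 0) (hv : 0 < v)
    (y₁ y₁' y₁'' y₂ y₂' y₂'' : ℝ → ℝ)
    (hy₁ : ∀ x ∈ Ioi (0:ℝ), HasDerivAt y₁ (y₁' x) x)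
    (hy₁' : ∀ x ∈ Ioi (0:ℝ), HasDerivAt y₁' (y₁'' x) x)
    (hy₂ : ∀ x ∈ Ioi (0:ℝ), HasDerivAt y₂ (y₂' x) x)
    (hy₂' : ∀ x ∈ Ioi (0:ℝ), HasDerivAt y₂' (y₂'' x) x)
    (hy₁pos : ∀ x ∈ Ioi (0:ℝ), 0 < y₁ x)
    (hy₂pos : ∀ x ∈ Ioi (0:ℝ), 0 < y₂ x)
    (hode₁ : ∀ x ∈ Ioi (0:ℝ),
      x ^ 2 * y₁'' x + (c * x + d) * y₁' x - (a * x + b) * y₁ x = 0)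
    (hode₂ : ∀ x ∈ Ioi (0:ℝ),
      x ^ 2 * y₂'' x + (c * x + d) * y₂' x - (a * x + b) * y₂ x = 0)
    (hWr : ∀ x ∈ Ioi (0:ℝ),
      y₁ x * y₂' x - y₁' x * y₂ x = -v * x ^ (-c) * Real.exp (d / x))
    (Cb t₀ : ℝ) (hCb : 0 < Cb) (ht₀ : 0 < t₀)
    (hbd₂ : ∀ t ≥ t₀, y₂ t ≤ Cb * t ^ ((1:ℝ)/4 - c/2) * Real.exp (-(2 * Real.sqrt (a * t))))
    (hbd₁ : ∀ t ∈ Ioc (0:ℝ) t₀, y₁ t ≤ Cb * t ^ ((2:ℝ) - c) * Real.exp (d / t))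
    (f : ℝ → ℝ) (hfb : ∃ M : ℝ, ∀ x ∈ Ioi (0:ℝ), |f x| ≤ M)
    (hfc : ContinuousOn f (Ioi (0:ℝ)))
    (W : ℝ → ℝ) (hW : ∀ t ∈ Ioi (0:ℝ), W t = -v * t ^ (-c) * Real.exp (d / t))
    (y : ℝ → ℝ)
    (hy : ∀ x ∈ Ioi (0:ℝ),
      y x = (∫ t in Ioi x, y₂ t * f t / (t ^ 2 * W t)) * y₁ x
            + (∫ t in Ioc (0:ℝ) x, y₁ t * f t / (t ^ 2 * W t)) * y₂ x) :
    (∀ x ∈ Ioi (0:ℝ),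
        IntegrableOn (fun t => y₂ t * f t / (t ^ 2 * W t)) (Ioi x) ∧
        IntegrableOn (fun t => y₁ t * f t / (t ^ 2 * W t)) (Ioc (0:ℝ) x)) ∧
      ∀ x ∈ Ioi (0:ℝ),
        x ^ 2 * deriv (deriv y) x + (c * x + d) * deriv y x - (a * x + b) * y x = f x :=
  stmt_19_general a b c d v ha hd hv y₁ y₁' y₁'' y₂ y₂' y₂'' hy₁ hy₁' hy₂ hy₂' hy₁pos hy₂pos hode₁
    hode₂ hWr Cb t₀ ht₀ hbd₂ hbd₁ f hfb hfc W hW y hy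
end
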